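/- arXiv:1312.4743 — 2 statements merged into one kernel-verified Lean document; each statement's English description precedes it below -/
import Mathlib

section
/- For integers $1 \leq k < n$, the number $N = \frac{(k(n-k))! \cdot 1! \cdot 2! \cdots (k-1)!}{(n-k)! \, (n-k+1)! \cdots (n-1)!}$ is a positive integer. -/
open Finset

lemma hermite (t : ℕ) (ht : 0 < t) (x : ℕ) :
    ∑ j ∈ range t, (x + j) / t = x := by
  induction x with
  | zero =>
    simp only [Nat.zero_add]
    rw [Finset.sum_eq_zero]
    intro j hj
    exact Nat.div_eq_of_lt (mem_range.mp hj)
  | succ x ih =>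
    have h1 : ∑ j ∈ range (t+1), (x + j) / t
        = (∑ j ∈ range t, (x + j) / t) + (x + t) / t := Finset.sum_range_succ _ _
    have h2 : ∑ j ∈ range (t+1), (x + j) / t
        = (∑ j ∈ range t, (x + (j+1)) / t) + (x + 0) / t := Finset.sum_range_succ' _ _
    have h3 : (x + t) / t = x / t + 1 := Nat.add_div_right x ht
    have h4 : ∑ j ∈ range t, (x + 1 + j) / t = ∑ j ∈ range t, (x + (j+1)) / t := by
      apply Finset.sum_congr rfl; intro j _; ring_nf
    simp only [Nat.add_zero] at h2
    omega

lemma base_case (t m k : ℕ) (ht : 0 < t) (hm : m < t) (hk : k ≤ t) :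
    ∑ i ∈ range k, (m + i) / t = k + m - t := by
  induction k with
  | zero => simp; omega
  | succ k ih =>
    rw [Finset.sum_range_succ, ih (by omega)]
    rcases lt_or_ge (m + k) t with h | h
    · rw [Nat.div_eq_of_lt h]; omega
    · have : (m + k) / t = 1 := by
        rw [Nat.div_eq_sub_div ht h, Nat.div_eq_of_lt (by omega)]
      rw [this]; omega

lemma key (t : ℕ) (ht : 0 < t) :
    ∀ s m k, m + k = s →
      ∑ i ∈ range k, (m + i) / t ≤ k * m / t + ∑ i ∈ range k, i / t := by
  intro s
  induction s using Nat.strong_induction_on with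
  | _ s ih =>
    intro m k hs
    rcases le_or_gt t m with hm | hm
    · -- reduce m by t
      have ihm := ih (m - t + k) (by omega) (m - t) k rfl
      have h1 : ∑ i ∈ range k, (m + i) / t
          = (∑ i ∈ range k, (m - t + i) / t) + k := by
        have e : ∀ i, (m + i) / t = (m - t + i) / t + 1 := fun i => by
          rw [show m + i = (m - t + i) + t by omega, Nat.add_div_right _ ht]
        rw [Finset.sum_congr rfl (fun i _ => e i), Finset.sum_add_distrib,
          Finset.sum_const, card_range, smul_eq_mul, mul_one]
      have h3 : k * m / t = k * (m - t) / t + k := by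
        rw [show k * m = k * (m - t) + k * t by
          rw [← Nat.mul_add, Nat.sub_add_cancel hm], Nat.add_mul_div_right _ _ ht]
      omega
    rcases le_or_gt t k with hk | hk
    · -- reduce k by t
      obtain ⟨u, rfl⟩ : ∃ u, k = u + t := ⟨k - t, by omega⟩
      have ihk := ih (m + u) (by omega) m u rfl
      have h1 : ∑ i ∈ range (u + t), (m + i) / t
          = (∑ i ∈ range u, (m + i) / t) + (m + u) := by
        rw [Finset.sum_range_add]
        congr 1
        calc ∑ j ∈ range t, (m + (u + j)) / t
            = ∑ j ∈ range t, (m + u + j) / t := by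
              simp only [← add_assoc]
          _ = m + u := hermite t ht _
      have h2 : ∑ i ∈ range (u + t), i / t
          = (∑ i ∈ range u, i / t) + u := by
        rw [Finset.sum_range_add]
        congr 1
        exact hermite t ht _
      have h3 : (u + t) * m / t = u * m / t + m := by
        rw [show (u + t) * m = u * m + m * t by ring, Nat.add_mul_div_right _ _ ht]
      omega
    · -- base case : m < t, k < t
      have h1 := base_case t m k ht hm (le_of_lt hk)
      have h2 : ∑ i ∈ range k, i / t = 0 := by
        apply Finset.sum_eq_zero
        intro i hi
        exact Nat.div_eq_of_lt (lt_trans (mem_range.mp hi) hk)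
      rw [h1, h2]
      rcases le_or_gt (k + m) t with h | h
      · exact le_trans (by omega : k + m - t ≤ 0) (Nat.zero_le _)
      · have hle : (k + m - t) * t ≤ k * m := by
          zify [le_of_lt h]
          nlinarith [sub_pos.mpr (Nat.cast_lt.mpr hm : (m:ℤ) < t),
            sub_pos.mpr (Nat.cast_lt.mpr hk : (k:ℤ) < t)]
        have := (Nat.le_div_iff_mul_le ht).mpr hle
        omega

lemma fact_prod_dvd (k m : ℕ) (hk : 1 ≤ k) (hm : 1 ≤ m) :
    (∏ i ∈ range k, (m + i).factorial) ∣
      (k * m).factorial * ∏ i ∈ range k, i.factorial := by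
  have hD : (∏ i ∈ range k, (m + i).factorial) ≠ 0 :=
    Finset.prod_ne_zero_iff.mpr fun i _ => (Nat.factorial_pos _).ne'
  have hA : (k * m).factorial * (∏ i ∈ range k, i.factorial) ≠ 0 :=
    Nat.mul_ne_zero (Nat.factorial_pos _).ne'
      (Finset.prod_ne_zero_iff.mpr fun i _ => (Nat.factorial_pos _).ne')
  rw [← Nat.factorization_le_iff_dvd hD hA, Finsupp.le_def]
  intro p
  by_cases hp : p.Prime
  · haveI : Fact p.Prime := ⟨hp⟩
    set b := Nat.log p (k * m) + 1 with hb
    have hbound : ∀ x : ℕ, x ≤ k * m → Nat.log p x < b := fun x hx =>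
      lt_of_le_of_lt (Nat.log_mono_right hx) (by omega)
    have hmi : ∀ i, i < k → m + i ≤ k * m := by
      intro i hi
      calc m + i ≤ m + (k - 1) * m := by
            have h1 : i ≤ (k - 1) := by omega
            have h2 : (k - 1) ≤ (k - 1) * m := Nat.le_mul_of_pos_right _ hm
            omega
        _ = k * m := by
            obtain ⟨k', rfl⟩ : ∃ k', k = k' + 1 := ⟨k - 1, by omega⟩
            simp only [Nat.add_sub_cancel]
            ring
    have hik : ∀ i, i < k → i ≤ k * m := fun i hi =>
      le_trans (le_of_lt hi) (Nat.le_mul_of_pos_right _ hm)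
    -- rewrite factorizations via Legendre
    have hDf : (∏ i ∈ range k, (m + i).factorial).factorization p
        = ∑ i ∈ range k, ∑ j ∈ Finset.Ico 1 b, (m + i) / p ^ j := by
      rw [Nat.factorization_prod (fun i _ => (Nat.factorial_pos _).ne'),
        Finset.sum_apply']
      exact Finset.sum_congr rfl fun i hi => by
        rw [Nat.factorization_def _ hp,
          padicValNat_factorial (hbound _ (hmi i (mem_range.mp hi)))]
    have hAf : ((k * m).factorial * ∏ i ∈ range k, i.factorial).factorization p
        = (∑ j ∈ Finset.Ico 1 b, (k * m) / p ^ j)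
          + ∑ i ∈ range k, ∑ j ∈ Finset.Ico 1 b, i / p ^ j := by
      rw [Nat.factorization_mul (Nat.factorial_pos _).ne'
          (Finset.prod_ne_zero_iff.mpr fun i _ => (Nat.factorial_pos _).ne'),
        Finsupp.add_apply,
        Nat.factorization_prod (fun i _ => (Nat.factorial_pos _).ne'),
        Finset.sum_apply', Nat.factorization_def _ hp,
        padicValNat_factorial (hbound _ le_rfl)]
      congr 1
      exact Finset.sum_congr rfl fun i hi => by
        rw [Nat.factorization_def _ hp,
          padicValNat_factorial (hbound _ (hik i (mem_range.mp hi)))]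
    rw [hDf, hAf, Finset.sum_comm, Finset.sum_comm (s := range k)]
    rw [← Finset.sum_add_distrib]
    apply Finset.sum_le_sum
    intro j _
    exact key (p ^ j) (pow_pos hp.pos j) (m + k) m k rfl
  · simp [Nat.factorization_eq_zero_of_not_prime _ hp]

/-- for `1 ≤ k < n`, the quantity
`N = (k(n-k))! · 1!·2!⋯(k-1)! / ((n-k)!·(n-k+1)!⋯(n-1)!)` is a positive integer,
i.e. there is a positive natural number `N` with
`N · ∏_{i=0}^{k-1} (n-k+i)! = (k(n-k))! · ∏_{i=0}^{k-1} i!`. -/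
theorem young_tableaux_count_integral (k n : ℕ) (hk : 1 ≤ k) (hkn : k < n) :
    ∃ N : ℕ, 0 < N ∧
      N * ∏ i ∈ Finset.range k, (n - k + i).factorial
        = (k * (n - k)).factorial * ∏ i ∈ Finset.range k, i.factorial := by
  have hm : 1 ≤ n - k := by omega
  have hdvd := fact_prod_dvd k (n - k) hk hm
  set D := ∏ i ∈ Finset.range k, (n - k + i).factorial with hD
  set A := (k * (n - k)).factorial * ∏ i ∈ Finset.range k, i.factorial with hA
  have hApos : 0 < A :=
    Nat.mul_pos (Nat.factorial_pos _)
      (Finset.prod_pos fun i _ => Nat.factorial_pos _)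
  refine ⟨A / D, ?_, Nat.div_mul_cancel hdvd⟩
  have hDpos : 0 < D := Finset.prod_pos fun i _ => Nat.factorial_pos _
  exact Nat.div_pos (Nat.le_of_dvd hApos hdvd) hDpos
end

section
/- Let $k < l$ and $m \geq 2l$. The map sending $c_i \mapsto c_i$ for $1 \leq i \leq k$ and $c_i \mapsto 0$ for $k < i \leq l$ induces a well-defined surjective graded ring homomorphism $\mathbb{Q}[c_1,\dots,c_l]/\langle h_{m-l+1},\dots,h_m\rangle \to \mathbb{Q}[c_1,\dots,c_k]/\langle h_{m-l+1},\dots,h_{m-l+k}\rangle$. -/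
open MvPolynomial

noncomputable section

/-- The weight function giving `cᵢ` (the variable `X ⟨i-1⟩`) degree `2i`. -/
def gradWt (k : ℕ) : Fin k → ℕ := fun i => 2 * (i.1 + 1)

/-- `hp k r` is the degree-`2r` homogeneous component of the formal inverse of
`1 + c₁ + ⋯ + c_k` in `ℚ[c₁,…,c_k]`, given by `h₀ = 1` and the recursion
`h_r = -(c₁ h_{r-1} + ⋯ + c_k h_{r-k})` (terms with negative index omitted). -/
def hp (k : ℕ) : ℕ → MvPolynomial (Fin k) ℚ
  | 0 => 1
  | (r + 1) => -∑ i : Fin k, if i.1 ≤ r then X i * hp k (r - i.1) else 0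
  termination_by r => r
  decreasing_by simp_all <;> omega

/-- The ideal `⟨h_{n-k+1},…,h_n⟩` of the Borel presentation of `H^*(G_k(ℂⁿ);ℚ)`. -/
def gIdeal (n k : ℕ) : Ideal (MvPolynomial (Fin k) ℚ) :=
  Ideal.span ((fun j => hp k (n - k + j)) '' Set.Icc 1 k)

/-- The rational cohomology ring of the Grassmannian `G_k(ℂⁿ)`,
`A_{n,k} = ℚ[c₁,…,c_k]/⟨h_{n-k+1},…,h_n⟩`. -/
abbrev Ank (n k : ℕ) : Type := MvPolynomial (Fin k) ℚ ⧸ gIdeal n k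

/-- The substitution `cᵢ ↦ cᵢ` for `i ≤ k` and `cᵢ ↦ 0` for `i > k`,
as a ring homomorphism `ℚ[c₁,…,c_l] → ℚ[c₁,…,c_k]`. -/
def lowerVars (l k : ℕ) : MvPolynomial (Fin l) ℚ →+* MvPolynomial (Fin k) ℚ :=
  (MvPolynomial.aeval fun i : Fin l =>
    if h : i.1 < k then (X ⟨i.1, h⟩ : MvPolynomial (Fin k) ℚ) else 0).toRingHom

/-!
Setting `c_{k+1} = ⋯ = c_l = 0` turns the recursion `h_r = -(c₁ h_{r-1} + ⋯ + c_l h_{r-l})`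
into the one in `k` variables, so the generator `h_{m-l+j}` of the source ideal goes to `h_{m-l+j}`
in `ℚ[c₁,…,c_k]`. For `j ≤ k` this is a generator of the target ideal; beyond them, the
recursion writes each `h_r` as a combination of `h_{r-1},…,h_{r-k}`, so by induction every
`h_r` with `r > m - l` lies in the target ideal. Surjectivity holds already before passing to
quotients, since the inclusion of variables is a section of the substitution.
-/

lemma hp_succ (k r : ℕ) :
    hp k (r + 1) = -∑ i : Fin k, if i.1 ≤ r then X i * hp k (r - i.1) else 0 := by
  rw [hp]

lemma lowerVars_X (l k : ℕ) (i : Fin l) :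
    lowerVars l k (X i) = if h : i.1 < k then X ⟨i.1, h⟩ else 0 := by
  simp [lowerVars]

lemma lowerVars_rename_castLE {k l : ℕ} (hkl : k ≤ l) (q : MvPolynomial (Fin k) ℚ) :
    lowerVars l k (rename (Fin.castLE hkl) q) = q := by
  have hX : ∀ i : Fin k, lowerVars l k (X (Fin.castLE hkl i)) = X i := by
    intro i
    simp [lowerVars_X, i.2]
  induction q using MvPolynomial.induction_on with
  | C a => simp [lowerVars]
  | add p q hp hq => simp only [map_add, hp, hq]
  | mul_X p i hp => simp only [map_mul, rename_X, hX, hp]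

lemma lowerVars_surjective {k l : ℕ} (hkl : k ≤ l) : Function.Surjective (lowerVars l k) :=
  fun q => ⟨rename (Fin.castLE hkl) q, lowerVars_rename_castLE hkl q⟩

lemma lowerVars_hp {k l : ℕ} (hkl : k ≤ l) (r : ℕ) : lowerVars l k (hp l r) = hp k r := by
  induction r using Nat.strong_induction_on with
  | _ r ih =>
    rcases r with _ | r
    · simp [hp]
    rw [hp_succ, hp_succ, map_neg, map_sum, neg_inj]
    refine (Fintype.sum_of_injective (Fin.castLE hkl) (Fin.castLE_injective hkl) _ _ ?_ ?_).symm
    · intro i hi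
      have hik : ¬ i.1 < k := by simpa [Fin.range_castLE] using hi
      split_ifs <;> simp [lowerVars_X, hik]
    · intro i
      rw [Fin.val_castLE]
      split_ifs with hir
      · simp [lowerVars_X, i.2, ih (r - i.1) (by omega)]
      · exact (map_zero _).symm

lemma hp_mem_gIdeal {n k r : ℕ} (hr : n - k + 1 ≤ r) : hp k r ∈ gIdeal n k := by
  induction r using Nat.strong_induction_on with
  | _ r ih =>
    by_cases hrn : r ≤ n - k + k
    · obtain ⟨j, hj, rfl⟩ : ∃ j, j ∈ Set.Icc 1 k ∧ n - k + j = r :=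
        ⟨r - (n - k), ⟨by omega, by omega⟩, by omega⟩
      exact Ideal.subset_span ⟨j, hj, rfl⟩
    obtain ⟨r, rfl⟩ : ∃ r', r = r' + 1 := ⟨r - 1, by omega⟩
    rw [hp_succ]
    refine neg_mem (Ideal.sum_mem _ fun i _ => ?_)
    split_ifs with hir
    · exact Ideal.mul_mem_left _ _ (ih (r - i.1) (by omega) (by have := i.2; omega))
    · exact zero_mem _

lemma gIdeal_le_comap_lowerVars {k l : ℕ} (hkl : k ≤ l) (m : ℕ) :
    gIdeal m l ≤ (gIdeal (m - l + k) k).comap (lowerVars l k) := by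
  rw [gIdeal, Ideal.span_le]
  rintro _ ⟨j, hj, rfl⟩
  rw [SetLike.mem_coe, Ideal.mem_comap, lowerVars_hp hkl]
  exact hp_mem_gIdeal (by have := hj.1; omega)

theorem restriction_surjection_lower_k_general (k l m : ℕ) (hkl : k < l) :
    ∃ f : Ank m l →+* Ank (m - l + k) k, Function.Surjective f ∧
      ∀ p : MvPolynomial (Fin l) ℚ,
        f (Ideal.Quotient.mk (gIdeal m l) p)
          = Ideal.Quotient.mk (gIdeal (m - l + k) k) (lowerVars l k p) :=
  ⟨Ideal.quotientMap _ _ (gIdeal_le_comap_lowerVars hkl.le m),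
    Ideal.quotientMap_surjective (lowerVars_surjective hkl.le), fun _ => Ideal.quotientMap_mk⟩

/-- for `k < l`, `m ≥ 2l`, the substitution `cᵢ ↦ cᵢ` (`i ≤ k`),
`cᵢ ↦ 0` (`k < i ≤ l`) induces a well-defined surjective graded ring homomorphism
`ℚ[c₁,…,c_l]/⟨h_{m-l+1},…,h_m⟩ → ℚ[c₁,…,c_k]/⟨h_{m-l+1},…,h_{m-l+k}⟩`
(the target ring is `Ank (m-l+k) k`, whose defining ideal is generated by
`h_{m-l+1},…,h_{m-l+k}` in `ℚ[c₁,…,c_k]`). -/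
theorem restriction_surjection_lower_k (k l m : ℕ) (hk : 1 ≤ k) (hkl : k < l)
    (hm : 2 * l ≤ m) :
    ∃ f : Ank m l →+* Ank (m - l + k) k, Function.Surjective f ∧
      ∀ p : MvPolynomial (Fin l) ℚ,
        f (Ideal.Quotient.mk (gIdeal m l) p)
          = Ideal.Quotient.mk (gIdeal (m - l + k) k) (lowerVars l k p) :=
  restriction_surjection_lower_k_general k l m hkl
end
end
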